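/- Let X be a Banach space whose norm is asymptotically uniformly convex. Then for every ε ∈ (0, 1), σ_ε(B_X) ⊆ (1 − Δ(ε))·B_X, where Δ(ε) := (1/2)·δ̄_X(ε/3). -/

import Mathlib

open Metric Set Pointwise

noncomputable section

/-- The weak topology on a normed space `X`: the initial topology with respect to all
continuous linear functionals. -/
noncomputable def weakTop (X : Type*) [NormedAddCommGroup X] [NormedSpace ℝ X] :
    TopologicalSpace X :=
  ⨅ f : X →L[ℝ] ℝ, TopologicalSpace.induced (⇑f) inferInstance

/-- A set is weakly open if it is open for the weak topology. -/
def IsWeaklyOpen {X : Type*} [NormedAddCommGroup X] [NormedSpace ℝ X] (V : Set X) : Prop :=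
  @IsOpen X (weakTop X) V

/-- The derived set `σ_ε(K)`: remove from `K` the union of all weakly open sets `V` whose
trace on `K` has (norm) diameter `< ε`. -/
noncomputable def dSet {X : Type*} [NormedAddCommGroup X] [NormedSpace ℝ X] (ε : ℝ)
    (K : Set X) : Set X :=
  K \ ⋃₀ {V : Set X | IsWeaklyOpen V ∧ Metric.diam (V ∩ K) < ε}

/-- The transfinite iterates `σ_ε^α(K)`: `σ_ε^0(K) = K`, `σ_ε^{α+1}(K) = σ_ε(σ_ε^α(K))`,
and `σ_ε^α(K) = ⋂_{β<α} σ_ε^β(K)` for `α` a limit ordinal. -/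
noncomputable def dIter {X : Type*} [NormedAddCommGroup X] [NormedSpace ℝ X] (ε : ℝ)
    (K : Set X) (α : Ordinal.{0}) : Set X :=
  Ordinal.limitRecOn α K (fun _ ih => dSet ε ih)
    (fun o _ ih => ⋂ (β : Ordinal.{0}) (h : β < o), ih β h)

/-- `Φ(X, ε)`: the least ordinal `α` with `σ_ε^α(B_X) = ∅` (junk value `0` if there is none). -/
noncomputable def PhiEps (X : Type*) [NormedAddCommGroup X] [NormedSpace ℝ X] (ε : ℝ) :
    Ordinal.{0} :=
  sInf {γ : Ordinal.{0} | dIter ε (Metric.closedBall (0 : X) 1) γ = ∅}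

/-- `Φ(X, ε)` is well defined, i.e. some derived iterate of the unit ball is empty. -/
def PhiDefinedAt (X : Type*) [NormedAddCommGroup X] [NormedSpace ℝ X] (ε : ℝ) : Prop :=
  ∃ γ : Ordinal.{0}, dIter ε (Metric.closedBall (0 : X) 1) γ = ∅

/-- `Φ(X) < ∞`, i.e. `Φ(X, ε)` is well defined for every `ε > 0`. -/
def PhiDefined (X : Type*) [NormedAddCommGroup X] [NormedSpace ℝ X] : Prop :=
  ∀ ε : ℝ, 0 < ε → PhiDefinedAt X ε

/-- The weak-fragmentability index `Φ(X) = sup_{ε > 0} Φ(X, ε)`. -/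
noncomputable def Phi (X : Type*) [NormedAddCommGroup X] [NormedSpace ℝ X] : Ordinal.{0} :=
  ⨆ ε : {ε : ℝ // 0 < ε}, PhiEps X ε.1

/-- The modulus of asymptotic uniform convexity `δ̄_X(t)`. -/
def aucMod (X : Type*) [NormedAddCommGroup X] [NormedSpace ℝ X] (t : ℝ) : ℝ :=
  ⨅ x : Metric.sphere (0 : X) 1,
    ⨆ Y : {Y : Submodule ℝ X // IsClosed (Y : Set X) ∧ FiniteDimensional ℝ (X ⧸ Y)},
      ⨅ y : Metric.sphere (0 : ↥Y.1) 1, (‖(x : X) + t • ((y : ↥Y.1) : X)‖ - 1)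

/-- A normed space is asymptotically uniformly convex (AUC) if `δ̄_X(t) > 0` for all `t > 0`. -/
def IsAUC (X : Type*) [NormedAddCommGroup X] [NormedSpace ℝ X] : Prop :=
  ∀ t : ℝ, 0 < t → 0 < aucMod X t

/-- `X` admits an equivalent asymptotically uniformly convex norm, i.e. it is isomorphic, as a
topological vector space, to an AUC normed space. -/
def AUCRenormable (X : Type u) [NormedAddCommGroup X] [NormedSpace ℝ X] : Prop :=
  ∃ (Y : Type u) (_ : NormedAddCommGroup Y) (_ : NormedSpace ℝ Y),
    Nonempty (X ≃L[ℝ] Y) ∧ IsAUC Y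

/-! Fix `x` in the unit ball with `‖x‖ > 1 - δ/2`, where `δ = δ̄_X(ε/3)`. Asymptotic uniform
convexity at `x/‖x‖` gives a closed finite-codimensional subspace `Y` with
`‖x + z‖ > (1 + 3δ/4)‖x‖ > 1 + δ/8` whenever `z ∈ Y` and `‖z‖ ≥ ε‖x‖/3`. The quotient map
`X → X/Y` is weakly continuous because `X/Y` is finite dimensional, so the preimage `V` of a small
ball around the class of `x` is a weak neighbourhood of `x`. Every `u ∈ V ∩ B_X` is `x + z + m`
with `z ∈ Y` and `m` small, and `‖x + z‖ ≤ ‖u‖ + ‖m‖` forces `‖z‖ < ε/3`; hence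
`diam (V ∩ B_X) < ε` and `x ∉ σ_ε(B_X)`. -/

open Topology

section WeakTopology

variable {X : Type} [NormedAddCommGroup X] [NormedSpace ℝ X]

theorem continuous_weakTop_clm (f : X →L[ℝ] ℝ) : Continuous[weakTop X, _] f :=
  continuous_iInf_dom (i := f) continuous_induced_dom

theorem continuous_weakTop_of_finiteDimensional {E : Type*} [NormedAddCommGroup E]
    [NormedSpace ℝ E] [FiniteDimensional ℝ E] (f : X →L[ℝ] E) : Continuous[weakTop X, _] f := by
  let e := (Module.finBasis ℝ E).equivFunL
  let coord i : X →L[ℝ] ℝ := (ContinuousLinearMap.proj i).comp (e.toContinuousLinearMap.comp f)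
  let _ : TopologicalSpace X := weakTop X
  have hcoord : Continuous (e ∘ f) := continuous_pi fun i => continuous_weakTop_clm (coord i)
  simpa [Function.comp_def] using e.symm.continuous.comp hcoord

theorem IsWeaklyOpen.preimage {E : Type*} [NormedAddCommGroup E] [NormedSpace ℝ E]
    [FiniteDimensional ℝ E] (f : X →L[ℝ] E) {U : Set E} (hU : IsOpen U) :
    IsWeaklyOpen (f ⁻¹' U) :=
  let _ : TopologicalSpace X := weakTop X
  hU.preimage (continuous_weakTop_of_finiteDimensional f)

end WeakTopology

/-- The index set of the supremum in `aucMod`. -/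
abbrev FinCodimSubspace (X : Type) [NormedAddCommGroup X] [NormedSpace ℝ X] : Type :=
  {Y : Submodule ℝ X // IsClosed (Y : Set X) ∧ FiniteDimensional ℝ (X ⧸ Y)}

section AUCModulus

variable {X : Type} [NormedAddCommGroup X] [NormedSpace ℝ X]

instance FinCodimSubspace.instNonempty : Nonempty (FinCodimSubspace X) :=
  ⟨⟨⊤, isClosed_univ, inferInstance⟩⟩

theorem neg_one_le_iInf_sphere (x : X) (t : ℝ) (Y : FinCodimSubspace X) :
    -1 ≤ ⨅ y : sphere (0 : Y.1) 1, (‖x + t • (y : X)‖ - 1) := by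
  rcases isEmpty_or_nonempty (sphere (0 : Y.1) 1) with _ | _
  · simp [Real.iInf_of_isEmpty]
  · exact le_ciInf fun y => by linarith [norm_nonneg (x + t • (y : X))]

theorem iInf_sphere_le (x : X) (t : ℝ) (Y : FinCodimSubspace X) (y : sphere (0 : Y.1) 1) :
    ⨅ y : sphere (0 : Y.1) 1, (‖x + t • (y : X)‖ - 1) ≤ ‖x + t • (y : X)‖ - 1 :=
  ciInf_le ⟨-1, by rintro _ ⟨y, rfl⟩; linarith [norm_nonneg (x + t • (y : X))]⟩ y

theorem iInf_sphere_le_of_norm_eq_one {x : X} (hx : ‖x‖ = 1) {t : ℝ} (ht : 0 ≤ t)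
    (Y : FinCodimSubspace X) : ⨅ y : sphere (0 : Y.1) 1, (‖x + t • (y : X)‖ - 1) ≤ t := by
  rcases isEmpty_or_nonempty (sphere (0 : Y.1) 1) with _ | ⟨⟨y⟩⟩
  · simpa [Real.iInf_of_isEmpty] using ht
  · refine (iInf_sphere_le x t Y y).trans ?_
    have hy : ‖(y : X)‖ = 1 := mem_sphere_zero_iff_norm.mp y.2
    have := norm_add_le x (t • (y : X))
    rw [norm_smul, Real.norm_of_nonneg ht, hy, hx] at this
    linarith

theorem neg_one_le_iSup_iInf_sphere (x : X) (t : ℝ) :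
    -1 ≤ ⨆ Y : FinCodimSubspace X, ⨅ y : sphere (0 : Y.1) 1, (‖x + t • (y : X)‖ - 1) := by
  by_cases hbdd : BddAbove (range fun Y : FinCodimSubspace X =>
      ⨅ y : sphere (0 : Y.1) 1, (‖x + t • (y : X)‖ - 1))
  · obtain ⟨Y⟩ := FinCodimSubspace.instNonempty (X := X)
    exact (neg_one_le_iInf_sphere x t Y).trans (le_ciSup hbdd Y)
  · simp [Real.iSup_of_not_bddAbove hbdd]

theorem aucMod_le_iSup_iInf_sphere (t : ℝ) (x : sphere (0 : X) 1) :
    aucMod X t ≤ ⨆ Y : FinCodimSubspace X, ⨅ y : sphere (0 : Y.1) 1, (‖x + t • (y : X)‖ - 1) :=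
  ciInf_le ⟨-1, by rintro _ ⟨x, rfl⟩; exact neg_one_le_iSup_iInf_sphere _ t⟩ x

theorem aucMod_le_self {t : ℝ} (ht : 0 ≤ t) : aucMod X t ≤ t := by
  rcases isEmpty_or_nonempty (sphere (0 : X) 1) with _ | ⟨⟨x⟩⟩
  · simpa [aucMod, Real.iInf_of_isEmpty] using ht
  · exact (aucMod_le_iSup_iInf_sphere t x).trans
      (Real.iSup_le (iInf_sphere_le_of_norm_eq_one (mem_sphere_zero_iff_norm.mp x.2) ht) ht)

theorem exists_finCodimSubspace_lt_norm_add {x : X} (hx : ‖x‖ = 1) {t η : ℝ}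
    (hη : η < aucMod X t) :
    ∃ Y : FinCodimSubspace X, ∀ y ∈ Y.1, ‖y‖ = 1 → 1 + η < ‖x + t • y‖ := by
  obtain ⟨Y, hY⟩ := exists_lt_of_lt_ciSup
    (hη.trans_le (aucMod_le_iSup_iInf_sphere t ⟨x, by simpa using hx⟩))
  refine ⟨Y, fun y hyY hy => ?_⟩
  have := hY.trans_le (iInf_sphere_le x t Y ⟨⟨y, hyY⟩, by simpa using hy⟩)
  simp only at this
  linarith

end AUCModulus

section Geometry

variable {X : Type} [NormedAddCommGroup X] [NormedSpace ℝ X]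

/-- Convexity of `s ↦ ‖x + s • u‖`, pinned at `‖x‖ ≤ 1` for `s = 0`. -/
theorem one_add_lt_norm_add_smul_of_le {x u : X} (hx : ‖x‖ ≤ 1) {η t s : ℝ} (hη : 0 ≤ η)
    (ht : 0 < t) (hts : t ≤ s) (h : 1 + η < ‖x + t • u‖) : 1 + η < ‖x + s • u‖ := by
  have hs : 0 < s := ht.trans_le hts
  set r := t / s
  have hr0 : 0 < r := div_pos ht hs
  have hr1 : r ≤ 1 := (div_le_one hs).mpr hts
  have hsplit : x + t • u = r • (x + s • u) + (1 - r) • x := by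
    rw [smul_add, smul_smul, div_mul_cancel₀ t hs.ne', sub_smul, one_smul]
    abel
  have hconv : ‖x + t • u‖ ≤ r * ‖x + s • u‖ + (1 - r) := by
    rw [hsplit]
    refine (norm_add_le _ _).trans ?_
    rw [norm_smul, norm_smul, Real.norm_of_nonneg hr0.le, Real.norm_of_nonneg (by linarith)]
    nlinarith
  have hgt : 0 < ‖x + s • u‖ - 1 := by nlinarith
  nlinarith

theorem exists_finCodimSubspace_mul_lt_norm_add {x : X} (hx : x ≠ 0) {t η : ℝ} (ht : 0 < t)
    (hη0 : 0 ≤ η) (hη : η < aucMod X t) :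
    ∃ Y : FinCodimSubspace X, ∀ z ∈ Y.1, t * ‖x‖ ≤ ‖z‖ → (1 + η) * ‖x‖ < ‖x + z‖ := by
  have hn : 0 < ‖x‖ := norm_pos_iff.mpr hx
  obtain ⟨Y, hY⟩ := exists_finCodimSubspace_lt_norm_add (x := ‖x‖⁻¹ • x)
    (by rw [norm_smul, norm_inv, norm_norm, inv_mul_cancel₀ hn.ne']) hη
  refine ⟨Y, fun z hzY hz => ?_⟩
  have hz0 : 0 < ‖z‖ := (mul_pos ht hn).trans_le hz
  have hunit := hY (‖z‖⁻¹ • z) (Y.1.smul_mem _ hzY)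
    (by rw [norm_smul, norm_inv, norm_norm, inv_mul_cancel₀ hz0.ne'])
  have hscale := one_add_lt_norm_add_smul_of_le (s := ‖z‖ / ‖x‖)
    (by rw [norm_smul, norm_inv, norm_norm, inv_mul_cancel₀ hn.ne']) hη0 ht
    ((le_div_iff₀ hn).mpr hz) hunit
  rwa [smul_smul, div_mul_eq_mul_div, div_eq_mul_inv, mul_inv_cancel₀ hz0.ne', one_mul,
    ← smul_add, norm_smul, norm_inv, norm_norm, ← div_eq_inv_mul, lt_div_iff₀ hn] at hscale

theorem norm_sub_lt_of_norm_mk_sub_lt {Y : Submodule ℝ X} {x u : X} {r ρ : ℝ}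
    (hY : ∀ z ∈ Y, r ≤ ‖z‖ → 1 + 2 * ρ ≤ ‖x + z‖) (hu : ‖u‖ ≤ 1)
    (hux : ‖(Submodule.Quotient.mk (u - x) : X ⧸ Y)‖ < ρ) : ‖u - x‖ < r + 2 * ρ := by
  have hρ : 0 < ρ := (norm_nonneg _).trans_lt hux
  obtain ⟨m, hm, hmρ⟩ := Submodule.Quotient.norm_mk_lt (Submodule.Quotient.mk (u - x) : X ⧸ Y) hρ
  have hyY : u - x - m ∈ Y := by
    simpa using Y.neg_mem ((Submodule.Quotient.eq Y).mp hm)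
  have hy : ‖u - x - m‖ < r := by
    by_contra! hr
    have := hY _ hyY hr
    rw [show x + (u - x - m) = u - m by abel] at this
    linarith [norm_sub_le u m]
  calc ‖u - x‖ = ‖(u - x - m) + m‖ := by rw [sub_add_cancel]
    _ ≤ ‖u - x - m‖ + ‖m‖ := norm_add_le _ _
    _ < r + 2 * ρ := by linarith

end Geometry

theorem exists_isWeaklyOpen_diam_inter_unitClosedBall_lt {X : Type} [NormedAddCommGroup X]
    [NormedSpace ℝ X] {ε : ℝ} (hε0 : 0 < ε) (hε1 : ε < 1) (hδ : 0 < aucMod X (ε / 3)) {x : X}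
    (hx1 : ‖x‖ ≤ 1) (hx : 1 - 2⁻¹ * aucMod X (ε / 3) < ‖x‖) :
    ∃ V : Set X, IsWeaklyOpen V ∧ x ∈ V ∧ diam (V ∩ closedBall 0 1) < ε := by
  set δ := aucMod X (ε / 3)
  have hδt : δ ≤ ε / 3 := aucMod_le_self (by positivity)
  have hx0 : x ≠ 0 := norm_pos_iff.mp (by linarith)
  obtain ⟨⟨Y, hYc, hYf⟩, hY⟩ := exists_finCodimSubspace_mul_lt_norm_add hx0 (t := ε / 3)
    (η := 3 / 4 * δ) (by positivity) (by positivity) (by linarith)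
  -- `δ < 1/3` makes `(1 + 3δ/4)(1 - δ/2) ≥ 1 + δ/8`.
  have hgrow : ∀ z ∈ Y, ε / 3 * ‖x‖ ≤ ‖z‖ → 1 + 2 * (δ / 16) ≤ ‖x + z‖ := fun z hzY hz =>
    le_of_lt (by nlinarith [hY z hzY hz])
  set V := Y.mkQL ⁻¹' ball (Y.mkQL x) (δ / 16)
  refine ⟨V, IsWeaklyOpen.preimage _ isOpen_ball, mem_ball_self (by positivity), ?_⟩
  have hnear : V ∩ closedBall 0 1 ⊆ closedBall x (ε / 3 + 2 * (δ / 16)) := by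
    rintro u ⟨huV, huB⟩
    rw [mem_preimage, mem_ball, dist_eq_norm, ← map_sub] at huV
    have := norm_sub_lt_of_norm_mk_sub_lt hgrow (mem_closedBall_zero_iff.mp huB) huV
    rw [mem_closedBall, dist_eq_norm]
    nlinarith
  calc diam (V ∩ closedBall 0 1) ≤ 2 * (ε / 3 + 2 * (δ / 16)) :=
        diam_le_of_subset_closedBall (by positivity) hnear
    _ < ε := by linarith

theorem dSet_subset_shrunk_ball_general (X : Type) [NormedAddCommGroup X] [NormedSpace ℝ X]
    (hauc : IsAUC X) (ε : ℝ) (hε0 : 0 < ε) (hε1 : ε < 1) :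
    dSet ε (Metric.closedBall (0 : X) 1) ⊆
      (1 - 2⁻¹ * aucMod X (ε / 3)) • Metric.closedBall (0 : X) 1 := by
  intro x ⟨hxB, hx_not_mem⟩
  by_cases hx : ‖x‖ ≤ 1 - 2⁻¹ * aucMod X (ε / 3)
  · rw [smul_unitClosedBall, mem_closedBall_zero_iff]
    exact hx.trans (Real.le_norm_self _)
  · obtain ⟨V, hV, hxV, hdiam⟩ := exists_isWeaklyOpen_diam_inter_unitClosedBall_lt hε0 hε1
      (hauc _ (by positivity)) (mem_closedBall_zero_iff.mp hxB) (not_le.mp hx)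
    exact (hx_not_mem (mem_sUnion_of_mem hxV ⟨hV, hdiam⟩)).elim

/-- For an asymptotically uniformly convex Banach space `X` and `ε ∈ (0,1)`,
`σ_ε(B_X) ⊆ (1 - Δ(ε))·B_X` where `Δ(ε) = δ̄_X(ε/3)/2`. -/
theorem dSet_subset_shrunk_ball (X : Type) [NormedAddCommGroup X] [NormedSpace ℝ X]
    [CompleteSpace X] (hauc : IsAUC X) (ε : ℝ) (hε0 : 0 < ε) (hε1 : ε < 1) :
    dSet ε (Metric.closedBall (0 : X) 1) ⊆
      (1 - 2⁻¹ * aucMod X (ε / 3)) • Metric.closedBall (0 : X) 1 :=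
  dSet_subset_shrunk_ball_general X hauc ε hε0 hε1

end
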